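/- arXiv:1403.7943 — 2 statements merged into one kernel-verified Lean document; each statement's English description precedes it below -/
import Mathlib

section
/- Let g : [0,1] → ℝ be continuous with g ≥ 0 and g(0) = g(1) = 0, let a, b ∈ T_g, and let f_{a,b} : [0, d_g(a,b)] → T_g be an isometric map with f_{a,b}(0) = a and f_{a,b}(d_g(a,b)) = b. Then for every continuous injective map q : [0,1] → T_g with q(0) = a and q(1) = b, one has q([0,1]) = f_{a,b}([0, d_g(a,b)]). In particular (T_g, d_g) is an ℝ-tree. -/
open Set

/-- The minimum of `g` over the interval between `s` and `t`. -/
noncomputable def mg (g : ℝ → ℝ) (s t : ℝ) : ℝ :=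
  sInf (g '' Set.Icc (min s t) (max s t))

/-- The pseudo-distance `d_g(s,t) = g(s) + g(t) - 2 m_g(s,t)`. -/
noncomputable def dg (g : ℝ → ℝ) (s t : ℝ) : ℝ :=
  g s + g t - 2 * mg g s t

section mglem
variable {g : ℝ → ℝ} (hcont : ContinuousOn g (Set.Icc 0 1))

lemma mg_comm (s t : ℝ) : mg g s t = mg g t s := by
  simp [mg, min_comm, max_comm]

lemma mg_of_le {s t : ℝ} (h : s ≤ t) : mg g s t = sInf (g '' Set.Icc s t) := by
  simp [mg, min_eq_left h, max_eq_right h]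

include hcont in
lemma mg_le' {s t x : ℝ} (hs : 0 ≤ s) (ht : t ≤ 1) (hst : s ≤ t)
    (hx : x ∈ Set.Icc s t) : mg g s t ≤ g x := by
  rw [mg_of_le hst]
  have hsub : Set.Icc s t ⊆ Set.Icc 0 1 := Icc_subset_Icc hs ht
  have hc : IsCompact (g '' Set.Icc s t) :=
    (isCompact_Icc).image_of_continuousOn (hcont.mono hsub)
  exact csInf_le hc.bddBelow (mem_image_of_mem _ hx)

include hcont in
lemma mg_exists {s t : ℝ} (hs : 0 ≤ s) (ht : t ≤ 1) (hst : s ≤ t) :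
    ∃ x ∈ Set.Icc s t, g x = mg g s t := by
  rw [mg_of_le hst]
  have hsub : Set.Icc s t ⊆ Set.Icc 0 1 := Icc_subset_Icc hs ht
  have hc : IsCompact (g '' Set.Icc s t) :=
    (isCompact_Icc).image_of_continuousOn (hcont.mono hsub)
  have hne : (g '' Set.Icc s t).Nonempty := (nonempty_Icc.2 hst).image g
  obtain ⟨x, hx, hgx⟩ := hc.sInf_mem hne
  exact ⟨x, hx, hgx⟩

include hcont in
lemma mg_mono {s t s' t' : ℝ} (hs : 0 ≤ s') (ht : t' ≤ 1) (h1 : s' ≤ s) (h2 : t ≤ t')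
    (hst : s ≤ t) : mg g s' t' ≤ mg g s t := by
  obtain ⟨x, hx, hgx⟩ := mg_exists hcont (hs.trans h1) (h2.trans ht) hst
  rw [← hgx]
  exact mg_le' hcont hs ht (h1.trans (hst.trans h2)) ⟨h1.trans hx.1, hx.2.trans h2⟩

include hcont in
lemma mg_split {s t u : ℝ} (hs : 0 ≤ s) (hu : u ≤ 1) (h1 : s ≤ t) (h2 : t ≤ u) :
    mg g s u = min (mg g s t) (mg g t u) := by
  rw [mg_of_le (h1.trans h2), mg_of_le h1, mg_of_le h2]
  rw [← csInf_union]
  · rw [← image_union, Icc_union_Icc_eq_Icc h1 h2]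
  · exact ((isCompact_Icc).image_of_continuousOn (hcont.mono (Icc_subset_Icc hs (h2.trans hu)))).bddBelow
  · exact (nonempty_Icc.2 h1).image g
  · exact ((isCompact_Icc).image_of_continuousOn (hcont.mono (Icc_subset_Icc (hs.trans h1) hu))).bddBelow
  · exact (nonempty_Icc.2 h2).image g

include hcont in
lemma mg_four_key {s t u v : ℝ} (hs : 0 ≤ s) (hv : v ≤ 1)
    (hst : s ≤ t) (huv : u ≤ v) (hsu : s ≤ u) (htv : t ≤ v) :
    min (mg g s u + mg g t v) (mg g s v + mg g t u) ≤ mg g s t + mg g u v := by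
  rcases le_total t u with h | h
  · -- s ≤ t ≤ u ≤ v : adjacent
    refine (min_le_left _ _).trans (add_le_add ?_ ?_)
    · exact mg_mono hcont hs (huv.trans hv) le_rfl h hst
    · exact mg_mono hcont (hs.trans hst) hv h le_rfl huv
  · -- u ≤ t : cross, sorted s ≤ u ≤ t ≤ v
    have e1 : mg g s t = min (mg g s u) (mg g u t) :=
      mg_split hcont hs (htv.trans hv) hsu h
    have e2 : mg g u v = min (mg g u t) (mg g t v) :=
      mg_split hcont (hs.trans hsu) hv h htv
    rcases le_total (mg g s u) (mg g u t) with h1 | h1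
    · rcases le_total (mg g t v) (mg g u t) with h2 | h2
      · -- both outer small: left option equals sum
        rw [e1, e2, min_eq_left h1, min_eq_right h2]
        exact min_le_left _ _
      · -- mg u t ≤ mg t v : mg u v = mg u t, use right option
        refine (min_le_right _ _).trans ?_
        rw [e2, min_eq_left h2, mg_comm t u]
        have : mg g s v ≤ mg g s t :=
          mg_mono hcont hs hv le_rfl htv hst
        linarith
    · -- mg u t ≤ mg s u : mg s t = mg u t, use right option
      refine (min_le_right _ _).trans ?_
      rw [e1, min_eq_right h1, mg_comm t u]
      have : mg g s v ≤ mg g u v :=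
        mg_mono hcont hs hv hsu le_rfl huv
      linarith

include hcont in
lemma mg_four_key2 {s t u v : ℝ} (hs : 0 ≤ s) (ht : t ≤ 1)
    (hst : s ≤ t) (huv : u ≤ v) (hsu : s ≤ u) (hvt : v ≤ t) :
    min (mg g s u + mg g t v) (mg g s v + mg g t u) ≤ mg g s t + mg g u v := by
  -- nested: s ≤ u ≤ v ≤ t
  have e1 : mg g s t = min (mg g s v) (mg g v t) :=
    mg_split hcont hs ht (hsu.trans huv) hvt
  refine (min_le_right _ _).trans ?_
  rcases le_total (mg g s v) (mg g v t) with h1 | h1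
  · rw [e1, min_eq_left h1, mg_comm t u]
    have : mg g u t ≤ mg g u v :=
      mg_mono hcont (hs.trans hsu) ht le_rfl hvt huv
    linarith
  · rw [e1, min_eq_right h1, mg_comm t u]
    have h2 : mg g s v ≤ mg g u v :=
      mg_mono hcont hs (hvt.trans ht) hsu le_rfl huv
    have h3 : mg g u t ≤ mg g v t :=
      mg_mono hcont (hs.trans hsu) ht huv le_rfl hvt
    linarith

include hcont in
lemma mg_four_sorted {s t u v : ℝ} (hs : 0 ≤ s) (ht : t ≤ 1) (hv : v ≤ 1)
    (hst : s ≤ t) (huv : u ≤ v) (hsu : s ≤ u) :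
    min (mg g s u + mg g t v) (mg g s v + mg g t u) ≤ mg g s t + mg g u v := by
  rcases le_total t v with h | h
  · exact mg_four_key hcont hs hv hst huv hsu h
  · exact mg_four_key2 hcont hs ht hst huv hsu h

include hcont in
lemma mg_four_A {s t u v : ℝ} (hs : s ∈ Icc (0:ℝ) 1) (ht : t ∈ Icc (0:ℝ) 1)
    (hu : u ∈ Icc (0:ℝ) 1) (hv : v ∈ Icc (0:ℝ) 1) (hst : s ≤ t) (huv : u ≤ v) :
    min (mg g s u + mg g t v) (mg g s v + mg g t u) ≤ mg g s t + mg g u v := by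
  rcases le_total s u with hsu | hsu
  · exact mg_four_sorted hcont hs.1 ht.2 hv.2 hst huv hsu
  · have h := mg_four_sorted hcont hu.1 hv.2 ht.2 huv hst hsu
    rw [mg_comm u s, mg_comm v t, mg_comm u t, mg_comm v s,
      add_comm (mg g t u), add_comm (mg g u v)] at h
    exact h

include hcont in
lemma mg_four_B {s t u v : ℝ} (hs : s ∈ Icc (0:ℝ) 1) (ht : t ∈ Icc (0:ℝ) 1)
    (hu : u ∈ Icc (0:ℝ) 1) (hv : v ∈ Icc (0:ℝ) 1) (hst : s ≤ t) :
    min (mg g s u + mg g t v) (mg g s v + mg g t u) ≤ mg g s t + mg g u v := by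
  rcases le_total u v with huv | huv
  · exact mg_four_A hcont hs ht hu hv hst huv
  · have h := mg_four_A hcont hs ht hv hu hst huv
    rw [mg_comm v u, min_comm] at h
    exact h

include hcont in
lemma mg_four {s t u v : ℝ} (hs : s ∈ Icc (0:ℝ) 1) (ht : t ∈ Icc (0:ℝ) 1)
    (hu : u ∈ Icc (0:ℝ) 1) (hv : v ∈ Icc (0:ℝ) 1) :
    min (mg g s u + mg g t v) (mg g s v + mg g t u) ≤ mg g s t + mg g u v := by
  rcases le_total s t with hst | hst
  · exact mg_four_B hcont hs ht hu hv hst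
  · have h := mg_four_B hcont ht hs hu hv hst
    rw [add_comm (mg g t u), add_comm (mg g t v), min_comm, mg_comm t s] at h
    exact h
end mglem



lemma pass_through {T : Type*} [MetricSpace T] (w : T)
    (hgp : ∀ x y z : T, min (dist w x + dist w y - dist x y)
      (dist w y + dist w z - dist y z) ≤ dist w x + dist w z - dist x z)
    (γ : ℝ → T) (hγ : Continuous γ) {c d : ℝ} (hcd : c ≤ d)
    (hbtw : dist (γ c) w + dist w (γ d) = dist (γ c) (γ d)) :
    ∃ s ∈ Set.Icc c d, γ s = w := by
  set v := γ d with hv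
  set S : Set ℝ := {t | t ∈ Set.Icc c d ∧ dist w v + dist w (γ t) - dist v (γ t) = 0} with hS
  have hSclosed : IsClosed S := by
    have : S = Set.Icc c d ∩ (fun t => dist w v + dist w (γ t) - dist v (γ t)) ⁻¹' {0} := by
      ext t; simp [hS]
    rw [this]
    exact isClosed_Icc.inter (IsClosed.preimage (by fun_prop) isClosed_singleton)
  have hcS : c ∈ S := by
    refine ⟨⟨le_rfl, hcd⟩, ?_⟩
    have h1 := dist_comm v (γ c)
    have h2 := dist_comm w (γ c)
    have h3 := dist_comm (γ c) (γ d)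
    rw [hv]
    linarith [hbtw]
  have hSne : S.Nonempty := ⟨c, hcS⟩
  have hSbdd : BddAbove S := ⟨d, fun t ht => ht.1.2⟩
  set t0 := sSup S with ht0
  have ht0S : t0 ∈ S := hSclosed.csSup_mem hSne hSbdd
  refine ⟨t0, ht0S.1, ?_⟩
  by_contra hne
  have hδ : 0 < dist (γ t0) w := dist_pos.2 hne
  have ht0d : t0 < d := by
    rcases lt_or_eq_of_le ht0S.1.2 with h | h
    · exact h
    · exfalso
      have := ht0S.2
      rw [h] at this
      simp only [hv, dist_self, sub_zero] at this
      have hz : dist w (γ d) = 0 := by linarith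
      apply hne
      rw [h]
      exact (dist_eq_zero.1 hz).symm
  obtain ⟨ε, hε, hball⟩ := Metric.continuous_iff.1 hγ t0 (dist (γ t0) w) hδ
  set t1 := min (t0 + ε / 2) d with ht1
  have ht01 : t0 < t1 := lt_min (by linarith) ht0d
  have ht1d : t1 ≤ d := min_le_right _ _
  have hdist1 : dist t1 t0 < ε := by
    rw [Real.dist_eq, abs_of_nonneg (by linarith : (0:ℝ) ≤ t1 - t0)]
    have : t1 ≤ t0 + ε / 2 := min_le_left _ _
    linarith
  have hnear : dist (γ t1) (γ t0) < dist (γ t0) w := hball t1 hdist1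
  have ht1S : t1 ∈ S := by
    refine ⟨⟨(ht0S.1.1).trans ht01.le, ht1d⟩, ?_⟩
    have key := hgp v (γ t1) (γ t0)
    have h6 := ht0S.2
    have h7 : 0 < dist w (γ t1) + dist w (γ t0) - dist (γ t1) (γ t0) := by
      have tri := dist_triangle w (γ t1) (γ t0)
      have e1 := dist_comm w (γ t0)
      have e3 := dist_comm (γ t0) (γ t1)
      linarith
    have h8 : 0 ≤ dist w v + dist w (γ t1) - dist v (γ t1) := by
      have := dist_triangle v w (γ t1)
      have := dist_comm v w
      linarith [dist_triangle v w (γ t1), dist_comm v w]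
    rcases min_le_iff.1 key with h | h
    · linarith
    · linarith
  have : t1 ≤ t0 := le_csSup hSbdd ht1S
  linarith



/-- In the tree `T_g` (a metric space `T` with surjection `p : [0,1] → T` realizing the
distances `d_g`), if `f` is an isometric map from `[0, d(a,b)]` to `T` joining `a` to `b`,
then every continuous injective path `q : [0,1] → T` from `a` to `b` has the same range
as `f`; in particular `T_g` is an `ℝ`-tree. -/
theorem range_injective_path_eq_arc
    (g : ℝ → ℝ) (hcont : ContinuousOn g (Set.Icc 0 1))
    (hnonneg : ∀ x ∈ Set.Icc (0:ℝ) 1, 0 ≤ g x)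
    (h0 : g 0 = 0) (h1 : g 1 = 0)
    (T : Type*) [MetricSpace T] (p : Set.Icc (0:ℝ) 1 → T)
    (hsurj : Function.Surjective p)
    (hdist : ∀ s t : Set.Icc (0:ℝ) 1, dist (p s) (p t) = dg g s t)
    (a b : T)
    (f : Set.Icc (0:ℝ) (dist a b) → T)
    (hf_iso : ∀ x y : Set.Icc (0:ℝ) (dist a b), dist (f x) (f y) = |(x : ℝ) - (y : ℝ)|)
    (hf0 : f ⟨0, le_rfl, dist_nonneg⟩ = a) (hf1 : f ⟨dist a b, dist_nonneg, le_rfl⟩ = b)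
    (q : Set.Icc (0:ℝ) 1 → T) (hq_cont : Continuous q) (hq_inj : Function.Injective q)
    (hq0 : q ⟨0, le_rfl, zero_le_one⟩ = a) (hq1 : q ⟨1, zero_le_one, le_rfl⟩ = b) :
    Set.range q = Set.range f := by
  have hgp : ∀ w x y z : T, min (dist w x + dist w y - dist x y)
      (dist w y + dist w z - dist y z) ≤ dist w x + dist w z - dist x z := by
    intro w x y z
    obtain ⟨sw, rfl⟩ := hsurj w
    obtain ⟨sx, rfl⟩ := hsurj x
    obtain ⟨sy, rfl⟩ := hsurj y
    obtain ⟨sz, rfl⟩ := hsurj z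
    simp only [hdist, dg]
    have key := mg_four hcont sx.2 sz.2 sw.2 sy.2
    rw [min_le_iff] at key ⊢
    have c1 := mg_comm (g := g) (sz:ℝ) (sw:ℝ)
    have c2 := mg_comm (g := g) (sx:ℝ) (sw:ℝ)
    have c3 := mg_comm (g := g) (sz:ℝ) (sy:ℝ)
    have c4 := mg_comm (g := g) (sx:ℝ) (sy:ℝ)
    have c5 := mg_comm (g := g) (sw:ℝ) (sy:ℝ)
    have c6 := mg_comm (g := g) (sx:ℝ) (sz:ℝ)
    have c7 := mg_comm (g := g) (sy:ℝ) (sz:ℝ)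
    have c8 := mg_comm (g := g) (sw:ℝ) (sz:ℝ)
    rcases key with k | k
    · right; linarith
    · left; linarith
  set γ : ℝ → T := fun t => q (Set.projIcc 0 1 zero_le_one t) with hγdef
  have hγc : Continuous γ := hq_cont.comp continuous_projIcc
  have hγmem : ∀ (t : ℝ) (ht : t ∈ Set.Icc (0:ℝ) 1), γ t = q ⟨t, ht⟩ := by
    intro t ht
    rw [hγdef]
    simp only [Set.projIcc_of_mem zero_le_one ht]
  have hγ0 : γ 0 = a := by
    rw [hγmem 0 ⟨le_rfl, zero_le_one⟩]; exact hq0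
  have hγ1 : γ 1 = b := by
    rw [hγmem 1 ⟨zero_le_one, le_rfl⟩]; exact hq1
  apply Set.Subset.antisymm
  · -- range q ⊆ range f
    rintro _ ⟨t0, rfl⟩
    set z := q t0 with hzdef
    have hα0 : 0 ≤ (dist a z + dist a b - dist z b) / 2 := by
      have := dist_triangle z a b
      have := dist_comm z a
      linarith
    have hαD : (dist a z + dist a b - dist z b) / 2 ≤ dist a b := by
      have := dist_triangle a b z
      have := dist_comm b z
      linarith
    set α := (dist a z + dist a b - dist z b) / 2 with hαdef
    have hα2 : 2*α = dist a z + dist a b - dist z b := by rw [hαdef]; ring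
    set w := f ⟨α, hα0, hαD⟩ with hwdef
    have haw : dist a w = α := by
      have h := hf_iso ⟨0, le_rfl, dist_nonneg⟩ ⟨α, hα0, hαD⟩
      rw [hf0] at h
      rw [hwdef, h]
      show |(0:ℝ) - α| = α
      rw [zero_sub, abs_neg, abs_of_nonneg hα0]
    have hwb : dist w b = dist a b - α := by
      have h := hf_iso ⟨α, hα0, hαD⟩ ⟨dist a b, dist_nonneg, le_rfl⟩
      rw [hf1] at h
      rw [hwdef, h]
      show |α - dist a b| = dist a b - α
      rw [abs_of_nonpos (by linarith : α - dist a b ≤ 0)]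
      ring
    have hupper : dist z w ≤ dist a z - α := by
      have key := hgp z a w b
      have e1 := dist_comm z a
      have e2 := dist_comm z w
      have e3 := dist_comm z b
      rcases min_le_iff.1 key with k | k
      · linarith
      · linarith
    have hlower : dist a z - α ≤ dist z w := by
      have := dist_triangle a w z
      have := dist_comm w z
      linarith
    have hzw : dist z w = dist a z - α := le_antisymm hupper hlower
    have hγt0 : γ (t0:ℝ) = z := by
      rw [hγmem (t0:ℝ) t0.2, hzdef, Subtype.coe_eta]
    have hp1 : ∃ s ∈ Set.Icc (0:ℝ) (t0:ℝ), γ s = w := by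
      apply pass_through w (hgp w) γ hγc t0.2.1
      rw [hγ0, hγt0]
      have := dist_comm w z
      linarith
    have hp2 : ∃ s ∈ Set.Icc (t0:ℝ) 1, γ s = w := by
      apply pass_through w (hgp w) γ hγc t0.2.2
      rw [hγ1, hγt0]
      have := dist_comm w b
      linarith
    obtain ⟨s1, hs1, hws1⟩ := hp1
    obtain ⟨s2, hs2, hws2⟩ := hp2
    have hs1m : s1 ∈ Set.Icc (0:ℝ) 1 := ⟨hs1.1, hs1.2.trans t0.2.2⟩
    have hs2m : s2 ∈ Set.Icc (0:ℝ) 1 := ⟨t0.2.1.trans hs2.1, hs2.2⟩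
    have heq : q ⟨s1, hs1m⟩ = q ⟨s2, hs2m⟩ := by
      rw [← hγmem s1 hs1m, ← hγmem s2 hs2m, hws1, hws2]
    have hs12 : s1 = s2 := congrArg Subtype.val (hq_inj heq)
    have hs1t0 : s1 = (t0:ℝ) := le_antisymm hs1.2 (by rw [hs12]; exact hs2.1)
    have hwz : w = z := by
      rw [← hws1, hs1t0, hγt0]
    exact ⟨⟨α, hα0, hαD⟩, hwz⟩
  · -- range f ⊆ range q
    rintro _ ⟨x, rfl⟩
    have hax : dist a (f x) = (x:ℝ) := by
      have h := hf_iso ⟨0, le_rfl, dist_nonneg⟩ x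
      rw [hf0] at h
      rw [h]
      show |(0:ℝ) - (x:ℝ)| = (x:ℝ)
      rw [zero_sub, abs_neg, abs_of_nonneg x.2.1]
    have hxb : dist (f x) b = dist a b - (x:ℝ) := by
      have h := hf_iso x ⟨dist a b, dist_nonneg, le_rfl⟩
      rw [hf1] at h
      rw [h]
      show |(x:ℝ) - dist a b| = dist a b - (x:ℝ)
      rw [abs_of_nonpos (by linarith [x.2.2] : (x:ℝ) - dist a b ≤ 0)]
      ring
    obtain ⟨s, hs, hws⟩ := pass_through (f x) (hgp (f x)) γ hγc zero_le_one
      (by rw [hγ0, hγ1]; linarith)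
    exact ⟨Set.projIcc 0 1 zero_le_one s, hws⟩
end

section
/- Let g : [0,1] → ℝ be continuous with g ≥ 0 and g(0) = g(1) = 0, and let a, b ∈ T_g with a ≠ b. Then there exist s, t ∈ [0,1] with p_g(s) = a and p_g(t) = b such that for every s', t' ∈ [0,1] with p_g(s') = a and p_g(t') = b, the cyclic interval [s,t] is contained in the cyclic interval [s',t']; that is, there is a smallest cyclic interval whose endpoints project to a and b respectively. -/
open Set

/-- The cyclic interval `[s,t]` in `[0,1]`. -/
def cyclInt (s t : ℝ) : Set ℝ :=
  if s ≤ t then Set.Icc s t else Set.Icc s 1 ∪ Set.Icc 0 t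

section aux

variable {g : ℝ → ℝ}

lemma bddBelow_img (hnonneg : ∀ x ∈ Icc (0:ℝ) 1, 0 ≤ g x) {u v : ℝ}
    (h : Icc u v ⊆ Icc (0:ℝ) 1) : BddBelow (g '' Icc u v) := by
  refine ⟨0, ?_⟩
  rintro y ⟨x, hx, rfl⟩
  exact hnonneg x (h hx)

lemma icc_subset_unit {s t : ℝ} (hs : s ∈ Icc (0:ℝ) 1) (ht : t ∈ Icc (0:ℝ) 1) :
    Icc (min s t) (max s t) ⊆ Icc (0:ℝ) 1 :=
  Icc_subset_Icc (le_min hs.1 ht.1) (max_le hs.2 ht.2)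

lemma mg_le (hnonneg : ∀ x ∈ Icc (0:ℝ) 1, 0 ≤ g x) {s t r : ℝ}
    (hs : s ∈ Icc (0:ℝ) 1) (ht : t ∈ Icc (0:ℝ) 1)
    (hr : r ∈ Icc (min s t) (max s t)) : mg g s t ≤ g r :=
  csInf_le (bddBelow_img hnonneg (icc_subset_unit hs ht)) ⟨r, hr, rfl⟩

lemma le_mg {s t c : ℝ} (h : ∀ r ∈ Icc (min s t) (max s t), c ≤ g r) : c ≤ mg g s t := by
  apply le_csInf ((nonempty_Icc.2 min_le_max).image g)
  rintro y ⟨x, hx, rfl⟩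
  exact h x hx

lemma dg_unpack (hnonneg : ∀ x ∈ Icc (0:ℝ) 1, 0 ≤ g x) {s t : ℝ}
    (hs : s ∈ Icc (0:ℝ) 1) (ht : t ∈ Icc (0:ℝ) 1) (hst : s ≤ t) (h : dg g s t = 0) :
    g s = g t ∧ ∀ r ∈ Icc s t, g t ≤ g r := by
  have hmin : min s t = s := min_eq_left hst
  have hmax : max s t = t := max_eq_right hst
  have h1 : mg g s t ≤ g s := mg_le hnonneg hs ht (by rw [hmin, hmax]; exact ⟨le_rfl, hst⟩)
  have h2 : mg g s t ≤ g t := mg_le hnonneg hs ht (by rw [hmin, hmax]; exact ⟨hst, le_rfl⟩)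
  have h' : g s + g t - 2 * mg g s t = 0 := h
  have hgs : g s = mg g s t := by linarith
  have hgt : g t = mg g s t := by linarith
  refine ⟨hgs.trans hgt.symm, fun r hr => ?_⟩
  rw [hgt]
  exact mg_le hnonneg hs ht (by rw [hmin, hmax]; exact hr)

lemma key (hnonneg : ∀ x ∈ Icc (0:ℝ) 1, 0 ≤ g x) {s₁ t₁ s₂ t₂ : ℝ}
    (h1 : s₁ ∈ Icc (0:ℝ) 1) (h4 : t₂ ∈ Icc (0:ℝ) 1)
    (h12 : s₁ ≤ t₁) (h23 : t₁ ≤ s₂) (h34 : s₂ ≤ t₂)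
    (hA : dg g s₁ s₂ = 0) (hB : dg g t₁ t₂ = 0) : dg g t₁ s₂ = 0 := by
  have ht₁ : t₁ ∈ Icc (0:ℝ) 1 := ⟨h1.1.trans h12, (h23.trans h34).trans h4.2⟩
  have hs₂ : s₂ ∈ Icc (0:ℝ) 1 := ⟨h1.1.trans (h12.trans h23), h34.trans h4.2⟩
  obtain ⟨hAeq, hAmin⟩ := dg_unpack hnonneg h1 hs₂ (h12.trans h23) hA
  obtain ⟨hBeq, hBmin⟩ := dg_unpack hnonneg ht₁ h4 (h23.trans h34) hB
  have e1 : g s₂ ≤ g t₁ := hAmin t₁ ⟨h12, h23⟩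
  have e2 : g t₁ ≤ g s₂ := by
    have := hBmin s₂ ⟨h23, h34⟩
    linarith [hBeq]
  have heq : g t₁ = g s₂ := le_antisymm e2 e1
  have hmin : min t₁ s₂ = t₁ := min_eq_left h23
  have hmax : max t₁ s₂ = s₂ := max_eq_right h23
  have hm : mg g t₁ s₂ = g s₂ := by
    apply le_antisymm
    · exact mg_le hnonneg ht₁ hs₂ (by rw [hmin, hmax]; exact ⟨h23, le_rfl⟩)
    · apply le_mg
      intro r hr
      rw [hmin, hmax] at hr
      exact hAmin r ⟨h12.trans hr.1, hr.2⟩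
  show g t₁ + g s₂ - 2 * mg g t₁ s₂ = 0
  rw [hm, heq]; ring

lemma dg_symm (g : ℝ → ℝ) (s t : ℝ) : dg g s t = dg g t s := by
  show g s + g t - 2 * sInf (g '' Icc (min s t) (max s t)) =
    g t + g s - 2 * sInf (g '' Icc (min t s) (max t s))
  rw [min_comm, max_comm]
  ring

lemma dg_zero_iff (hnonneg : ∀ x ∈ Icc (0:ℝ) 1, 0 ≤ g x) {x x₀ : ℝ}
    (hx : x ∈ Icc (0:ℝ) 1) (hx₀ : x₀ ∈ Icc (0:ℝ) 1) :
    dg g x x₀ = 0 ↔ g x = g x₀ ∧ ∀ r, min x x₀ < r → r < max x x₀ → g x₀ ≤ g r := by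
  constructor
  · intro h
    rcases le_total x x₀ with hle | hle
    · obtain ⟨he, hm⟩ := dg_unpack hnonneg hx hx₀ hle h
      refine ⟨he, fun r h1 h2 => ?_⟩
      rw [min_eq_left hle] at h1
      rw [max_eq_right hle] at h2
      exact hm r ⟨h1.le, h2.le⟩
    · have h' : dg g x₀ x = 0 := (dg_symm g x₀ x).trans h
      obtain ⟨he, hm⟩ := dg_unpack hnonneg hx₀ hx hle h'
      refine ⟨he.symm, fun r h1 h2 => ?_⟩
      rw [min_eq_right hle] at h1
      rw [max_eq_left hle] at h2
      have := hm r ⟨h1.le, h2.le⟩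
      linarith [he]
  · rintro ⟨he, hmono⟩
    have hub : g x₀ ≤ mg g x x₀ := by
      apply le_mg
      intro r hr
      rcases eq_or_lt_of_le hr.1 with hr1 | hr1
      · rcases min_choice x x₀ with hc | hc
        · rw [← hr1, hc, he]
        · rw [← hr1, hc]
      · rcases eq_or_lt_of_le hr.2 with hr2 | hr2
        · rcases max_choice x x₀ with hc | hc
          · rw [hr2, hc, he]
          · rw [hr2, hc]
        · exact hmono r hr1 hr2
    have hlb : mg g x x₀ ≤ g x₀ :=
      mg_le hnonneg hx hx₀ ⟨min_le_right _ _, le_max_right _ _⟩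
    show g x + g x₀ - 2 * mg g x x₀ = 0
    rw [le_antisymm hlb hub, he]; ring

lemma fiber_isClosed (hcont : ContinuousOn g (Icc 0 1))
    (hnonneg : ∀ x ∈ Icc (0:ℝ) 1, 0 ≤ g x) {x₀ : ℝ} (hx₀ : x₀ ∈ Icc (0:ℝ) 1) :
    IsClosed {x | x ∈ Icc (0:ℝ) 1 ∧ dg g x x₀ = 0} := by
  have hset : {x | x ∈ Icc (0:ℝ) 1 ∧ dg g x x₀ = 0} =
      (Icc (0:ℝ) 1 ∩ g ⁻¹' {g x₀}) ∩
        ⋂ r ∈ {r : ℝ | g r < g x₀}, {x | r ≤ min x x₀ ∨ max x x₀ ≤ r} := by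
    ext x
    simp only [mem_setOf_eq, mem_inter_iff, mem_preimage, mem_singleton_iff, mem_iInter]
    constructor
    · rintro ⟨hx, hdg⟩
      obtain ⟨he, hm⟩ := (dg_zero_iff hnonneg hx hx₀).1 hdg
      refine ⟨⟨hx, he⟩, fun r hr => ?_⟩
      by_contra hcon
      push_neg at hcon
      exact absurd (hm r hcon.1 hcon.2) (not_le.2 hr)
    · rintro ⟨⟨hx, he⟩, hr⟩
      refine ⟨hx, (dg_zero_iff hnonneg hx hx₀).2 ⟨he, fun r h1 h2 => ?_⟩⟩
      by_contra hcon
      rcases hr r (not_le.1 hcon) with h | h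
      · exact absurd h1 (not_lt.2 h)
      · exact absurd h2 (not_lt.2 h)
  rw [hset]
  refine IsClosed.inter ?_ ?_
  · exact hcont.preimage_isClosed_of_isClosed isClosed_Icc isClosed_singleton
  · refine isClosed_biInter fun r hr => IsClosed.union ?_ ?_
    · exact isClosed_le continuous_const (continuous_id.min continuous_const)
    · exact isClosed_le (continuous_id.max continuous_const) continuous_const

end aux

/-- In the tree `T_g` (a metric space `T` with surjection `p : [0,1] → T` realizing the
distances `d_g`), for any two distinct points `a ≠ b` there is a smallest cyclic interval
`[s,t]` with `p s = a` and `p t = b`. -/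
theorem exists_smallest_cyclic_interval
    (g : ℝ → ℝ) (hcont : ContinuousOn g (Set.Icc 0 1))
    (hnonneg : ∀ x ∈ Set.Icc (0:ℝ) 1, 0 ≤ g x)
    (h0 : g 0 = 0) (h1 : g 1 = 0)
    (T : Type*) [MetricSpace T] (p : Set.Icc (0:ℝ) 1 → T)
    (hsurj : Function.Surjective p)
    (hdist : ∀ s t : Set.Icc (0:ℝ) 1, dist (p s) (p t) = dg g s t)
    (a b : T) (hab : a ≠ b) :
    ∃ s t : Set.Icc (0:ℝ) 1, p s = a ∧ p t = b ∧
      ∀ s' t' : Set.Icc (0:ℝ) 1, p s' = a → p t' = b →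
        cyclInt (s : ℝ) (t : ℝ) ⊆ cyclInt (s' : ℝ) (t' : ℝ) := by
  classical
  set A : Set ℝ := {x | ∃ hx : x ∈ Set.Icc (0:ℝ) 1, p ⟨x, hx⟩ = a} with hA_def
  set B : Set ℝ := {x | ∃ hx : x ∈ Set.Icc (0:ℝ) 1, p ⟨x, hx⟩ = b} with hB_def
  have hpq : ∀ (x y : Set.Icc (0:ℝ) 1), p x = p y ↔ dg g x y = 0 := by
    intro x y
    rw [← hdist x y, dist_eq_zero]
  obtain ⟨sa, hpsa⟩ := hsurj a
  obtain ⟨sb, hpsb⟩ := hsurj b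
  have hA_eq : A = {x | x ∈ Icc (0:ℝ) 1 ∧ dg g x (sa : ℝ) = 0} := by
    ext x
    constructor
    · rintro ⟨hx, hp⟩
      exact ⟨hx, (hpq ⟨x, hx⟩ sa).1 (hp.trans hpsa.symm)⟩
    · rintro ⟨hx, hd⟩
      exact ⟨hx, ((hpq ⟨x, hx⟩ sa).2 hd).trans hpsa⟩
  have hB_eq : B = {x | x ∈ Icc (0:ℝ) 1 ∧ dg g x (sb : ℝ) = 0} := by
    ext x
    constructor
    · rintro ⟨hx, hp⟩
      exact ⟨hx, (hpq ⟨x, hx⟩ sb).1 (hp.trans hpsb.symm)⟩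
    · rintro ⟨hx, hd⟩
      exact ⟨hx, ((hpq ⟨x, hx⟩ sb).2 hd).trans hpsb⟩
  have hAcl : IsClosed A := by rw [hA_eq]; exact fiber_isClosed hcont hnonneg sa.2
  have hBcl : IsClosed B := by rw [hB_eq]; exact fiber_isClosed hcont hnonneg sb.2
  have hAsub : A ⊆ Icc (0:ℝ) 1 := fun x hx => hx.1
  have hBsub : B ⊆ Icc (0:ℝ) 1 := fun x hx => hx.1
  have hAne : A.Nonempty := ⟨(sa : ℝ), sa.2, hpsa⟩
  have hBne : B.Nonempty := ⟨(sb : ℝ), sb.2, hpsb⟩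
  have hAbdd : BddAbove A := bddAbove_Icc.mono hAsub
  have hBbddB : BddBelow B := bddBelow_Icc.mono hBsub
  have hBbddA : BddAbove B := bddAbove_Icc.mono hBsub
  -- the interleaving contradictions
  have hcAB : ∀ x₁ ∈ A, ∀ y₁ ∈ B, ∀ x₂ ∈ A, ∀ y₂ ∈ B,
      x₁ ≤ y₁ → y₁ ≤ x₂ → x₂ ≤ y₂ → False := by
    rintro x₁ ⟨h₁, hp₁⟩ y₁ ⟨h₂, hp₂⟩ x₂ ⟨h₃, hp₃⟩ y₂ ⟨h₄, hp₄⟩ l₁ l₂ l₃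
    have hA0 : dg g x₁ x₂ = 0 := (hpq ⟨x₁, h₁⟩ ⟨x₂, h₃⟩).1 (hp₁.trans hp₃.symm)
    have hB0 : dg g y₁ y₂ = 0 := (hpq ⟨y₁, h₂⟩ ⟨y₂, h₄⟩).1 (hp₂.trans hp₄.symm)
    have hk := key hnonneg h₁ h₄ l₁ l₂ l₃ hA0 hB0
    exact hab (hp₃.symm.trans (((hpq ⟨y₁, h₂⟩ ⟨x₂, h₃⟩).2 hk).symm.trans hp₂))
  have hcBA : ∀ y₁ ∈ B, ∀ x₁ ∈ A, ∀ y₂ ∈ B, ∀ x₂ ∈ A,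
      y₁ ≤ x₁ → x₁ ≤ y₂ → y₂ ≤ x₂ → False := by
    rintro y₁ ⟨h₁, hp₁⟩ x₁ ⟨h₂, hp₂⟩ y₂ ⟨h₃, hp₃⟩ x₂ ⟨h₄, hp₄⟩ l₁ l₂ l₃
    have hB0 : dg g y₁ y₂ = 0 := (hpq ⟨y₁, h₁⟩ ⟨y₂, h₃⟩).1 (hp₁.trans hp₃.symm)
    have hA0 : dg g x₁ x₂ = 0 := (hpq ⟨x₁, h₂⟩ ⟨x₂, h₄⟩).1 (hp₂.trans hp₄.symm)
    have hk := key hnonneg h₁ h₄ l₁ l₂ l₃ hB0 hA0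
    exact hab (hp₂.symm.trans (((hpq ⟨x₁, h₂⟩ ⟨y₂, h₃⟩).2 hk).trans hp₃))
  by_cases hI : ∃ β ∈ B, sSup A ≤ β
  · -- Case I : some point of B is above sSup A
    obtain ⟨β, hβB, hβ⟩ := hI
    have hsA : sSup A ∈ A := hAcl.csSup_mem hAne hAbdd
    set s := sSup A with hs_def
    set C := B ∩ Icc s 1 with hC_def
    have hCcl : IsClosed C := hBcl.inter isClosed_Icc
    have hCne : C.Nonempty := ⟨β, hβB, hβ, (hBsub hβB).2⟩
    have hCbdd : BddBelow C := hBbddB.mono inter_subset_left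
    have htC : sInf C ∈ C := hCcl.csInf_mem hCne hCbdd
    set t := sInf C with ht_def
    have htB : t ∈ B := htC.1
    obtain ⟨hsI, hps⟩ := hsA
    obtain ⟨htI, hpt⟩ := htB
    refine ⟨⟨s, hsI⟩, ⟨t, htI⟩, hps, hpt, ?_⟩
    rintro ⟨s', hs'I⟩ ⟨t', ht'I⟩ hps' hpt'
    have hs'A : s' ∈ A := ⟨hs'I, hps'⟩
    have ht'B : t' ∈ B := ⟨ht'I, hpt'⟩
    have hs's : s' ≤ s := le_csSup hAbdd hs'A
    have hst : s ≤ t := htC.2.1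
    show cyclInt s t ⊆ cyclInt s' t'
    rw [cyclInt, if_pos hst]
    by_cases ht's : t' < s
    · have hs't' : ¬ s' ≤ t' := fun hle =>
        hcAB s' hs'A t' ht'B s ⟨hsI, hps⟩ β hβB hle ht's.le hβ
      rw [cyclInt, if_neg hs't']
      intro u hu
      exact Or.inl ⟨hs's.trans hu.1, hu.2.trans htI.2⟩
    · push_neg at ht's
      have htt' : t ≤ t' := csInf_le hCbdd ⟨ht'B, ht's, ht'I.2⟩
      rw [cyclInt, if_pos ((hs's.trans hst).trans htt')]
      exact Icc_subset_Icc hs's htt'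
  · push_neg at hI
    by_cases hII : ∃ y ∈ A, y ≤ sInf B
    · -- Case II-a : some point of A is below sInf B
      obtain ⟨y, hyA, hy⟩ := hII
      have htB : sInf B ∈ B := hBcl.csInf_mem hBne hBbddB
      set t := sInf B with ht_def
      set D := A ∩ Icc 0 t with hD_def
      have hDcl : IsClosed D := hAcl.inter isClosed_Icc
      have hDne : D.Nonempty := ⟨y, hyA, (hAsub hyA).1, hy⟩
      have hDbdd : BddAbove D := hAbdd.mono inter_subset_left
      have hsD : sSup D ∈ D := hDcl.csSup_mem hDne hDbdd
      set s := sSup D with hs_def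
      have hsA : s ∈ A := hsD.1
      obtain ⟨hsI, hps⟩ := hsA
      obtain ⟨htI, hpt⟩ := htB
      refine ⟨⟨s, hsI⟩, ⟨t, htI⟩, hps, hpt, ?_⟩
      rintro ⟨s', hs'I⟩ ⟨t', ht'I⟩ hps' hpt'
      have hs'A : s' ∈ A := ⟨hs'I, hps'⟩
      have ht'B : t' ∈ B := ⟨ht'I, hpt'⟩
      have htt' : t ≤ t' := csInf_le hBbddB ht'B
      have hst : s ≤ t := hsD.2.2
      show cyclInt s t ⊆ cyclInt s' t'
      rw [cyclInt, if_pos hst]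
      by_cases hs's : s' ≤ s
      · rw [cyclInt, if_pos ((hs's.trans hst).trans htt')]
        exact Icc_subset_Icc hs's htt'
      · push_neg at hs's
        have hts' : t < s' := by
          rcases lt_or_ge t s' with h | h
          · exact h
          · exact absurd (le_csSup hDbdd ⟨hs'A, hs'I.1, h⟩) (not_le.2 hs's)
        have hns' : ¬ s' ≤ t' := fun hle =>
          hcAB s ⟨hsI, hps⟩ t ⟨htI, hpt⟩ s' hs'A t' ht'B hst hts'.le hle
        rw [cyclInt, if_neg hns']
        intro u hu
        exact Or.inr ⟨hsI.1.trans hu.1, hu.2.trans htt'⟩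
    · -- Case II-b : every point of A is above every point of B
      push_neg at hII
      have htB : sInf B ∈ B := hBcl.csInf_mem hBne hBbddB
      have hsA : sSup A ∈ A := hAcl.csSup_mem hAne hAbdd
      set t := sInf B with ht_def
      set s := sSup A with hs_def
      have hAhigh : ∀ x ∈ A, ∀ z ∈ B, z < x := by
        intro x hxA z hzB
        by_contra hcon
        push_neg at hcon
        exact hcBA t htB x hxA z hzB s hsA (hII x hxA).le hcon (hI z hzB).le
      obtain ⟨hsI, hps⟩ := hsA
      obtain ⟨htI, hpt⟩ := htB
      refine ⟨⟨s, hsI⟩, ⟨t, htI⟩, hps, hpt, ?_⟩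
      rintro ⟨s', hs'I⟩ ⟨t', ht'I⟩ hps' hpt'
      have hs'A : s' ∈ A := ⟨hs'I, hps'⟩
      have ht'B : t' ∈ B := ⟨ht'I, hpt'⟩
      have hts : t < s := hAhigh s ⟨hsI, hps⟩ t ⟨htI, hpt⟩
      have ht's' : t' < s' := hAhigh s' hs'A t' ht'B
      show cyclInt s t ⊆ cyclInt s' t'
      rw [cyclInt, if_neg (not_le.2 hts), cyclInt, if_neg (not_le.2 ht's')]
      rintro u (hu | hu)
      · exact Or.inl ⟨(le_csSup hAbdd hs'A).trans hu.1, hu.2⟩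
      · exact Or.inr ⟨hu.1, hu.2.trans (csInf_le hBbddB ht'B)⟩
end
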